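/- arXiv:1801.04024 — 2 statements merged into one kernel-verified Lean document; each statement's English description precedes it below -/
import Mathlib

section
/- Let G be a countable group and A a finite set with |A| ≥ 2. For every ε > 0, the set of ε-proximal shifts is open in the space 𝒮; consequently the set of shifts S ∈ 𝒮 on which the G-action is proximal (i.e., ε-proximal for every ε > 0) is a G_δ subset of 𝒮. -/
open scoped Pointwise

/-- The left-translation action of `G` on configurations: `(g • s)(h) = s (g⁻¹ * h)`. -/
def shiftAct {G A : Type*} [Group G] (g : G) (s : G → A) : G → A :=
  fun h => s (g⁻¹ * h)

/-- A shift: a nonempty, closed, `G`-invariant subset of the full shift `A^G` (with the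
product topology and the left-translation action). -/
def IsShift {G A : Type*} [Group G] [TopologicalSpace A] (S : Set (G → A)) : Prop :=
  S.Nonempty ∧ IsClosed S ∧ ∀ s ∈ S, ∀ g : G, shiftAct g s ∈ S

/-- A shift `S ⊆ A^G` is strongly irreducible if there is a finite `X ⊆ G` containing the
identity such that for all `E₁, E₂ ⊆ G` with `E₁X ∩ E₂X = ∅` and all `s₁, s₂ ∈ S` there is
`s ∈ S` agreeing with `s₁` on `E₁` and with `s₂` on `E₂`. -/
def StronglyIrreducible {G A : Type*} [Group G] (S : Set (G → A)) : Prop :=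
  ∃ X : Finset G, (1 : G) ∈ X ∧
    ∀ E₁ E₂ : Set G, (E₁ * (X : Set G)) ∩ (E₂ * (X : Set G)) = ∅ →
      ∀ s₁ ∈ S, ∀ s₂ ∈ S, ∃ s ∈ S, (∀ a ∈ E₁, s a = s₁ a) ∧ (∀ a ∈ E₂, s a = s₂ a)

open scoped Classical in
/-- The metric on `A^G` induced by an enumeration `G = {g₁, g₂, …}` (here `e n = g_{n+1}`):
`d(s, t) = 1 / min {n ≥ 1 : s gₙ ≠ t gₙ}` for `s ≠ t`, and `d(s, s) = 0`. -/
noncomputable def confDist {G A : Type*} (e : ℕ → G) (s t : G → A) : ℝ :=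
  if s = t then 0
  else 1 / (((sInf {n : ℕ | s (e n) ≠ t (e n)} : ℕ) : ℝ) + 1)

/-- The space of shifts in `A^G`. -/
abbrev ShiftSpace (G A : Type*) [Group G] [TopologicalSpace A] : Type _ :=
  {S : Set (G → A) // IsShift S}

/-- Two sets of configurations agree on `F ⊆ G` if they have the same sets of restrictions
to `F`. -/
def AgreeOn {G A : Type*} (F : Set G) (S T : Set (G → A)) : Prop :=
  ∀ p : G → A, (∃ s ∈ S, ∀ x ∈ F, s x = p x) ↔ (∃ t ∈ T, ∀ x ∈ F, t x = p x)

open scoped Classical in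
/-- The metric on the space of shifts: `d(S, T) = 1/(n+1)` where `n` is the largest index
such that `S` and `T` agree on `{g₁, …, gₙ}` (with `e k = g_{k+1}`), and `d(S, T) = 0` if
`S = T`. -/
noncomputable def shiftSpaceDist {G A : Type*} [Group G] [TopologicalSpace A] (e : ℕ → G)
    (S T : ShiftSpace G A) : ℝ :=
  if S = T then 0
  else 1 / (((sSup {n : ℕ | AgreeOn {g : G | ∃ k < n, e k = g} S.1 T.1} : ℕ) : ℝ) + 1)

/-- The metric topology on the space of shifts, generated by the open balls of the metric
`shiftSpaceDist`. -/
noncomputable def shiftSpaceTopology (G A : Type*) [Group G] [TopologicalSpace A]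
    (e : ℕ → G) : TopologicalSpace (ShiftSpace G A) :=
  TopologicalSpace.generateFrom
    {U : Set (ShiftSpace G A) |
      ∃ (S : ShiftSpace G A) (ε : ℝ), 0 < ε ∧ U = {T | shiftSpaceDist e S T < ε}}

/-- The space `𝒮`: the closure, in the space of shifts, of the strongly irreducible shifts,
with the `|A|` singleton (constant-configuration) shifts removed. -/
def scriptS (G A : Type*) [Group G] [TopologicalSpace A] (e : ℕ → G) :
    Set (ShiftSpace G A) :=
  @closure _ (shiftSpaceTopology G A e) {S : ShiftSpace G A | StronglyIrreducible S.1} \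
    {S : ShiftSpace G A | ∃ a : A, S.1 = {fun _ => a}}

/-- The subspace topology on `𝒮`. -/
noncomputable def scriptSTopology (G A : Type*) [Group G] [TopologicalSpace A]
    (e : ℕ → G) : TopologicalSpace ↥(scriptS G A e) :=
  TopologicalSpace.induced Subtype.val (shiftSpaceTopology G A e)

/-- The action of `G` on a shift `S` is `ε`-proximal if for all `s, t ∈ S` there is `g ∈ G`
with `d(g • s, g • t) < ε`. -/
def EpsProximal {G A : Type*} [Group G] (e : ℕ → G) (ε : ℝ) (S : Set (G → A)) : Prop :=
  ∀ s ∈ S, ∀ t ∈ S, ∃ g : G, confDist e (shiftAct g s) (shiftAct g t) < ε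

/-!
By compactness of `S × S`, an `ε`-proximal shift `S` is uniformly `ε`-proximal: finitely many
group elements `g` witness it, and `d(g • s, g • t) < ε` only depends on the values of `s` and
`t` on the finite set `g⁻¹ {g₁, …, g_K}`. So any shift with the same patterns as `S` on a large
enough finite window is `ε`-proximal as well, and such shifts form a ball around `S`.
-/

section ConfDist

variable {G A : Type*} {e : ℕ → G} {u v : G → A}

theorem confDist_le_of_forall_lt (he : Function.Surjective e) {K : ℕ}
    (h : ∀ k < K, u (e k) = v (e k)) : confDist e u v ≤ 1 / ((K : ℝ) + 1) := by
  classical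
  unfold confDist
  split_ifs with huv
  · positivity
  · have hne : {n : ℕ | u (e n) ≠ v (e n)}.Nonempty := by
      obtain ⟨x, hx⟩ := Function.ne_iff.mp huv
      obtain ⟨n, rfl⟩ := he x
      exact ⟨n, hx⟩
    have hK : K ≤ sInf {n : ℕ | u (e n) ≠ v (e n)} := by
      by_contra! hlt
      exact Nat.sInf_mem hne (h _ hlt)
    gcongr

theorem one_div_le_confDist {k : ℕ} (h : u (e k) ≠ v (e k)) :
    1 / ((k : ℝ) + 1) ≤ confDist e u v := by
  classical
  have huv : u ≠ v := fun huv => h (huv ▸ rfl)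
  rw [confDist, if_neg huv]
  gcongr
  exact Nat.sInf_le h

theorem exists_forall_confDist_lt_iff (he : Function.Surjective e) {ε : ℝ} (hε : 0 < ε) :
    ∃ K : ℕ, ∀ u v : G → A, confDist e u v < ε ↔ ∀ k < K, u (e k) = v (e k) := by
  classical
  have hex : ∃ n : ℕ, 1 / ((n : ℝ) + 1) < ε := exists_nat_one_div_lt hε
  refine ⟨Nat.find hex, fun u v => ⟨fun h k hk => ?_, fun h => ?_⟩⟩
  · by_contra hne
    exact Nat.find_min hex hk ((one_div_le_confDist hne).trans_lt h)
  · exact (confDist_le_of_forall_lt he h).trans_lt (Nat.find_spec hex)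

theorem isOpen_setOf_confDist_lt [TopologicalSpace A] [DiscreteTopology A]
    (he : Function.Surjective e) {ε : ℝ} (hε : 0 < ε) :
    IsOpen {p : (G → A) × (G → A) | confDist e p.1 p.2 < ε} := by
  obtain ⟨K, hK⟩ := exists_forall_confDist_lt_iff (A := A) he hε
  simp only [hK, Set.ofPred_forall]
  refine (Set.finite_Iio K).isOpen_biInter fun k _ => ?_
  have hcont : Continuous fun p : (G → A) × (G → A) => (p.1 (e k), p.2 (e k)) := by fun_prop
  exact (isOpen_discrete {q : A × A | q.1 = q.2}).preimage hcont

end ConfDist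

theorem continuous_shiftAct {G A : Type*} [Group G] [TopologicalSpace A] (g : G) :
    Continuous (shiftAct (A := A) g) :=
  continuous_pi fun _ => continuous_apply _

theorem exists_subset_image_Iio_of_surjective {G : Type*} {e : ℕ → G}
    (he : Function.Surjective e) {W : Set G} (hW : W.Finite) :
    ∃ N : ℕ, W ⊆ e '' Set.Iio N := by
  obtain ⟨M, hM⟩ := (hW.image (Function.surjInv he)).bddAbove
  refine ⟨M + 1, fun x hx => ⟨Function.surjInv he x, ?_, Function.surjInv_eq he x⟩⟩
  exact Nat.lt_succ_of_le (hM ⟨x, hx, rfl⟩)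

section AgreeOn

variable {G A : Type*}

theorem AgreeOn.refl (F : Set G) (S : Set (G → A)) : AgreeOn F S S :=
  fun _ => Iff.rfl

theorem AgreeOn.mono {F F' : Set G} {S T : Set (G → A)} (hF : F ⊆ F') (h : AgreeOn F' S T) :
    AgreeOn F S T := by
  intro p
  constructor
  · rintro ⟨s, hs, hsp⟩
    obtain ⟨t, ht, hts⟩ := (h s).mp ⟨s, hs, fun _ _ => rfl⟩
    exact ⟨t, ht, fun x hx => (hts x (hF hx)).trans (hsp x hx)⟩
  · rintro ⟨t, ht, htp⟩
    obtain ⟨s, hs, hst⟩ := (h t).mpr ⟨t, ht, fun _ _ => rfl⟩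
    exact ⟨s, hs, fun x hx => (hst x (hF hx)).trans (htp x hx)⟩

variable [Group G] [TopologicalSpace A]

theorem agreeOn_of_shiftSpaceDist_lt {e : ℕ → G} {S T : ShiftSpace G A} {N : ℕ}
    (h : shiftSpaceDist e S T < 1 / ((N : ℝ) + 1)) : AgreeOn (e '' Set.Iio N) S.1 T.1 := by
  classical
  by_cases hST : S = T
  · exact hST ▸ AgreeOn.refl _ _
  rw [shiftSpaceDist, if_neg hST] at h
  have hN : N < sSup {n : ℕ | AgreeOn {g : G | ∃ k < n, e k = g} S.1 T.1} :=
    Nat.lt_of_add_lt_add_right <| by exact_mod_cast lt_of_one_div_lt_one_div (by positivity) h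
  obtain ⟨n, hn, hNn⟩ := exists_lt_of_lt_csSup' hN
  refine hn.mono ?_
  rintro _ ⟨k, hk, hkg⟩
  exact ⟨k, hk.trans hNn, hkg⟩

end AgreeOn

section Proximal

variable {G A : Type*} [Group G] {e : ℕ → G}

theorem EpsProximal.mono {ε δ : ℝ} {S : Set (G → A)} (h : EpsProximal e ε S) (hεδ : ε ≤ δ) :
    EpsProximal e δ S := fun s hs t ht =>
  (h s hs t ht).imp fun _ hg => hg.trans_le hεδ

variable [TopologicalSpace A] [DiscreteTopology A]

theorem EpsProximal.exists_finset (he : Function.Surjective e) {ε : ℝ} (hε : 0 < ε)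
    {S : Set (G → A)} (hS : IsCompact S) (h : EpsProximal e ε S) :
    ∃ F : Finset G, ∀ s ∈ S, ∀ t ∈ S, ∃ g ∈ F, confDist e (shiftAct g s) (shiftAct g t) < ε := by
  have hopen (g : G) :
      IsOpen {p : (G → A) × (G → A) | confDist e (shiftAct g p.1) (shiftAct g p.2) < ε} :=
    (isOpen_setOf_confDist_lt he hε).preimage <|
      ((continuous_shiftAct g).comp continuous_fst).prodMk
        ((continuous_shiftAct g).comp continuous_snd)
  have hcover : S ×ˢ S ⊆
      ⋃ g, {p : (G → A) × (G → A) | confDist e (shiftAct g p.1) (shiftAct g p.2) < ε} := by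
    rintro ⟨s, t⟩ ⟨hs, ht⟩
    exact Set.mem_iUnion.mpr (h s hs t ht)
  obtain ⟨F, hF⟩ := (hS.prod hS).elim_finite_subcover _ hopen hcover
  refine ⟨F, fun s hs t ht => ?_⟩
  obtain ⟨g, hg, hgst⟩ := Set.mem_iUnion₂.mp (hF (Set.mk_mem_prod hs ht))
  exact ⟨g, hg, hgst⟩

theorem EpsProximal.exists_forall_agreeOn_epsProximal (he : Function.Surjective e) {ε : ℝ}
    (hε : 0 < ε) {S : Set (G → A)} (hS : IsCompact S) (h : EpsProximal e ε S) :
    ∃ N : ℕ, ∀ T : Set (G → A), AgreeOn (e '' Set.Iio N) S T → EpsProximal e ε T := by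
  obtain ⟨K, hK⟩ := exists_forall_confDist_lt_iff (A := A) he hε
  obtain ⟨F, hF⟩ := h.exists_finset he hε hS
  have hW : (((F : Set G) ×ˢ Set.Iio K).image fun p => p.1⁻¹ * e p.2).Finite :=
    (F.finite_toSet.prod (Set.finite_Iio K)).image _
  obtain ⟨N, hN⟩ := exists_subset_image_Iio_of_surjective he hW
  refine ⟨N, fun T hST t ht t' ht' => ?_⟩
  obtain ⟨s, hs, hst⟩ := (hST t).mpr ⟨t, ht, fun _ _ => rfl⟩
  obtain ⟨s', hs', hst'⟩ := (hST t').mpr ⟨t', ht', fun _ _ => rfl⟩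
  obtain ⟨g, hg, hss'⟩ := hF s hs s' hs'
  refine ⟨g, (hK _ _).mpr fun k hk => ?_⟩
  have hwin : g⁻¹ * e k ∈ e '' Set.Iio N := hN ⟨(g, k), ⟨hg, hk⟩, rfl⟩
  change t (g⁻¹ * e k) = t' (g⁻¹ * e k)
  rw [← hst _ hwin, ← hst' _ hwin]
  exact (hK _ _).mp hss' k hk

theorem isOpen_setOf_epsProximal [Finite A] (he : Function.Surjective e) {ε : ℝ} (hε : 0 < ε) :
    @IsOpen _ (shiftSpaceTopology G A e) {S : ShiftSpace G A | EpsProximal e ε S.1} := by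
  let _ := shiftSpaceTopology G A e
  rw [isOpen_iff_forall_mem_open]
  intro S hS
  obtain ⟨N, hN⟩ := hS.exists_forall_agreeOn_epsProximal he hε S.2.2.1.isCompact
  refine ⟨{T | shiftSpaceDist e S T < 1 / ((N : ℝ) + 1)},
    fun T hT => hN T.1 (agreeOn_of_shiftSpaceDist_lt hT),
    TopologicalSpace.isOpen_generateFrom_of_mem ⟨S, _, by positivity, rfl⟩, ?_⟩
  change shiftSpaceDist e S S < _
  rw [shiftSpaceDist, if_pos rfl]
  positivity

end Proximal

theorem epsProximal_isOpen_and_proximal_isGδ_general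
    (G : Type) [Group G]
    (A : Type) [Fintype A] [TopologicalSpace A] [DiscreteTopology A]
    (e : ℕ → G) (he : Function.Surjective e) :
    (∀ ε : ℝ, 0 < ε →
      @IsOpen ↥(scriptS G A e) (scriptSTopology G A e)
        {S : ↥(scriptS G A e) | EpsProximal e ε S.1.1}) ∧
    @IsGδ ↥(scriptS G A e) (scriptSTopology G A e)
      {S : ↥(scriptS G A e) | ∀ ε : ℝ, 0 < ε → EpsProximal e ε S.1.1} := by
  let _ := scriptSTopology G A e
  have hopen (ε : ℝ) (hε : 0 < ε) : IsOpen {S : ↥(scriptS G A e) | EpsProximal e ε S.1.1} :=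
    ⟨_, isOpen_setOf_epsProximal he hε, rfl⟩
  refine ⟨hopen, ?_⟩
  have hset : {S : ↥(scriptS G A e) | ∀ ε : ℝ, 0 < ε → EpsProximal e ε S.1.1}
      = ⋂ n : ℕ, {S : ↥(scriptS G A e) | EpsProximal e (1 / ((n : ℝ) + 1)) S.1.1} := by
    ext S
    simp only [Set.mem_iInter]
    refine ⟨fun h n => h _ (by positivity), fun h ε hε => ?_⟩
    obtain ⟨n, hn⟩ := exists_nat_one_div_lt hε
    exact (h n).mono hn.le
  rw [hset]
  exact IsGδ.iInter fun n => (hopen _ (by positivity)).isGδ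

/-- For every `ε > 0` the set of `ε`-proximal shifts is open in `𝒮`; consequently the set of
shifts in `𝒮` on which the `G`-action is proximal (i.e. `ε`-proximal for every `ε > 0`) is a
`G_δ` subset of `𝒮`. -/
theorem epsProximal_isOpen_and_proximal_isGδ
    (G : Type) [Group G] [Countable G]
    (A : Type) [Fintype A] [TopologicalSpace A] [DiscreteTopology A]
    (hA : 2 ≤ Fintype.card A)
    (e : ℕ → G) (he : Function.Surjective e) :
    (∀ ε : ℝ, 0 < ε →
      @IsOpen ↥(scriptS G A e) (scriptSTopology G A e)
        {S : ↥(scriptS G A e) | EpsProximal e ε S.1.1}) ∧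
    @IsGδ ↥(scriptS G A e) (scriptSTopology G A e)
      {S : ↥(scriptS G A e) | ∀ ε : ℝ, 0 < ε → EpsProximal e ε S.1.1} :=
  epsProximal_isOpen_and_proximal_isGδ_general G A e he
end

section
/- Let G be a countable group, A a finite set, and S ⊆ A^G a strongly irreducible shift containing at least two configurations. If g ∈ G is a non-identity element whose conjugacy class is infinite, then g acts non-trivially on S: there exists s ∈ S with g • s ≠ s. -/
open scoped Pointwise

/-- Let `G` be a countable group, `A` a finite set, and `S ⊆ A^G` a strongly irreducible
shift containing at least two configurations.  If `g ∈ G` is a non-identity element with an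
infinite conjugacy class, then `g` acts non-trivially on `S`. -/
theorem acts_nontrivially_of_infinite_conjugacy_class
    (G : Type) [Group G] [Countable G]
    (A : Type) [Fintype A] [TopologicalSpace A] [DiscreteTopology A]
    (S : Set (G → A)) (hS : IsShift S) (hSsi : StronglyIrreducible S)
    (hS2 : S.Nontrivial)
    (g : G) (hg : g ≠ 1) (hgconj : {h : G | IsConj g h}.Infinite) :
    ∃ s ∈ S, shiftAct g s ≠ s := by
  by_contra hcon
  push_neg at hcon
  -- every element of `S` is fixed by every conjugate of `g`
  have hinv : ∀ c : G, IsConj g c → ∀ s ∈ S, ∀ x : G, s (c⁻¹ * x) = s x := by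
    intro c hc s hs x
    obtain ⟨u, hu⟩ := hc
    set v : G := (u : G) with hv
    have hcval : c = v * g * v⁻¹ := by
      have h := hu.eq
      rw [eq_mul_inv_iff_mul_eq]
      exact h.symm
    have ht : shiftAct v⁻¹ s ∈ S := hS.2.2 s hs v⁻¹
    have := congrFun (hcon _ ht) (v⁻¹ * x)
    simp only [shiftAct] at this ⊢
    rw [hcval]
    have h1 : (v * g * v⁻¹)⁻¹ * x = v * (g⁻¹ * (v⁻¹ * x)) := by group
    have h2 : v * (v⁻¹ * x) = x := by group
    rw [h1]
    have h3 : (v⁻¹)⁻¹ * (g⁻¹ * (v⁻¹ * x)) = v * (g⁻¹ * (v⁻¹ * x)) := by group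
    have h4 : (v⁻¹)⁻¹ * (v⁻¹ * x) = x := by group
    rw [h3, h4] at this
    exact this
  obtain ⟨t₁, ht₁, t₂, ht₂, hne⟩ := hS2
  obtain ⟨h₀, hh₀⟩ := Function.ne_iff.mp hne
  obtain ⟨X, hX1, hXprop⟩ := hSsi
  -- pick a conjugate of `g` outside of `X * X⁻¹`
  have hfin : (↑X * (↑X)⁻¹ : Set G).Finite := (X.finite_toSet.mul X.finite_toSet.inv)
  obtain ⟨c, hc⟩ := (hgconj.diff hfin).nonempty
  have hcconj : IsConj g c := hc.1
  have hcnot : c ∉ (↑X * (↑X)⁻¹ : Set G) := hc.2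
  -- the two configurations to glue
  set s₁ : G → A := shiftAct h₀⁻¹ t₁ with hs₁def
  set s₂ : G → A := shiftAct c (shiftAct h₀⁻¹ t₂) with hs₂def
  have hs₁ : s₁ ∈ S := hS.2.2 t₁ ht₁ h₀⁻¹
  have hs₂ : s₂ ∈ S := hS.2.2 _ (hS.2.2 t₂ ht₂ h₀⁻¹) c
  have hdisj : (({1} : Set G) * (X : Set G)) ∩ (({c} : Set G) * (X : Set G)) = ∅ := by
    ext y
    simp only [Set.mem_inter_iff, Set.mem_empty_iff_false, iff_false]
    rintro ⟨⟨a, ha, b, hb, rfl⟩, ⟨a', ha', b', hb', heq⟩⟩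
    simp only [Set.mem_singleton_iff] at ha ha'
    subst ha
    rw [ha'] at heq
    simp only [one_mul] at heq
    apply hcnot
    have hcb : c = b * b'⁻¹ := by rw [← heq]; group
    rw [hcb]
    exact Set.mul_mem_mul hb (Set.inv_mem_inv.mpr hb')
  obtain ⟨s, hsS, hsE₁, hsE₂⟩ := hXprop {1} {c} hdisj s₁ hs₁ s₂ hs₂
  have e1 : s 1 = t₁ h₀ := by
    have := hsE₁ 1 rfl
    simpa [hs₁def, shiftAct] using this
  have e2 : s c = t₂ h₀ := by
    have := hsE₂ c rfl
    simp only [hs₂def, shiftAct] at this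
    rw [this]
    congr 1
    group
  have e3 : s 1 = s c := by
    have := hinv c hcconj s hsS c
    rw [inv_mul_cancel] at this
    exact this
  exact hh₀ (by rw [← e1, e3, e2])
end
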